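/- C is PF if and only if C is semiprime and mp. -/

import Mathlib

open CompleteLattice

/-- A complete lattice equipped with a commutator operation, axiomatizing the congruence
lattice of an algebra in a semidegenerate congruence-modular variety whose compact
congruences are closed under the commutator. -/
class CommutatorLattice (C : Type*) [CompleteLattice C] where
  comm : C → C → C
  comm_comm : ∀ a b : C, comm a b = comm b a
  comm_sSup : ∀ (s : Set C) (b : C), comm (sSup s) b = ⨆ a ∈ s, comm a b
  comm_le_inf : ∀ a b : C, comm a b ≤ a ⊓ b
  comm_top : ∀ a : C, comm a ⊤ = a
  compactlyGenerated : ∀ x : C,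
    ∃ s : Set C, (∀ a ∈ s, IsCompactElement a) ∧ sSup s = x
  top_isCompact : IsCompactElement (⊤ : C)
  comm_isCompact : ∀ a b : C, IsCompactElement a → IsCompactElement b →
    IsCompactElement (comm a b)

namespace CommutatorLattice

variable {C : Type*} [CompleteLattice C] [CommutatorLattice C]

/-- The residuation `a → b := ⨆ {c | [a,c] ≤ b}`. -/
def resid (a b : C) : C := sSup {c : C | comm a c ≤ b}

/-- The annihilator `a⊥ := a → ⊥`. -/
def ann (a : C) : C := resid a ⊥

/-- Iterated commutator: `cpow a n = [a,a]^n`, with the convention `[a,a]^0 = a`.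
Note that `[a,b]^n` for `n ≥ 1` equals `cpow (comm a b) (n-1)`. -/
def cpow (a : C) : ℕ → C
  | 0 => a
  | n + 1 => comm (cpow a n) (cpow a n)

/-- Prime elements: `p ≠ ⊤` and `[a,b] ≤ p` implies `a ≤ p` or `b ≤ p`. -/
def IsPrime (p : C) : Prop := p ≠ ⊤ ∧ ∀ a b : C, comm a b ≤ p → a ≤ p ∨ b ≤ p

/-- The radical `ρ(a) := ⨅ {p prime | a ≤ p}`. -/
def radical (a : C) : C := sInf {p : C | IsPrime p ∧ a ≤ p}

variable (C) in
/-- `C` is semiprime if `ρ(⊥) = ⊥`. -/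
def Semiprime : Prop := radical (⊥ : C) = ⊥

variable (C) in
/-- Condition (⋆): for all compact `a`, `b` and all `n ≥ 1` there is `m ≥ 0` with
`[[a,a]^m, [b,b]^m] ≤ [a,b]^n`.  Here `cpow (comm a b) n = [a,b]^(n+1)`, so `n : ℕ`
ranges exactly over the exponents `≥ 1` of the paper. -/
def Star : Prop := ∀ a b : C, IsCompactElement a → IsCompactElement b →
  ∀ n : ℕ, ∃ m : ℕ, comm (cpow a m) (cpow b m) ≤ cpow (comm a b) n

/-- Pure elements: `t ⊔ a⊥ = ⊤` for every compact `a ≤ t`. -/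
def IsPure (t : C) : Prop := ∀ a : C, IsCompactElement a → a ≤ t → t ⊔ ann a = ⊤

/-- w-pure elements: `t ⊔ (a → ρ(⊥)) = ⊤` for every compact `a ≤ t`. -/
def IsWPure (t : C) : Prop :=
  ∀ a : C, IsCompactElement a → a ≤ t → t ⊔ resid a (radical ⊥) = ⊤

/-- Complemented elements. -/
def IsComplEl (a : C) : Prop := ∃ b : C, a ⊔ b = ⊤ ∧ a ⊓ b = ⊥

/-- Regular elements: joins of sets of complemented elements. -/
def IsRegular (t : C) : Prop := ∃ S : Set C, (∀ a ∈ S, IsComplEl a) ∧ t = sSup S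

/-- Max-regular elements: maximal among regular elements distinct from `⊤`. -/
def IsMaxRegular (t : C) : Prop :=
  IsRegular t ∧ t ≠ ⊤ ∧ ∀ u : C, IsRegular u → u ≠ ⊤ → t ≤ u → u = t

/-- Maximal elements of `C \ {⊤}`. -/
def IsMaximal (p : C) : Prop := p ≠ ⊤ ∧ ∀ q : C, q ≠ ⊤ → p ≤ q → q = p

/-- Minimal primes. -/
def IsMinPrime (p : C) : Prop := IsPrime p ∧ ∀ q : C, IsPrime q → q ≤ p → q = p

variable (C) in
/-- `C` is mp if every prime lies above a unique minimal prime. -/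
def MP : Prop := ∀ p : C, IsPrime p → ∃! q : C, IsMinPrime q ∧ q ≤ p

variable (C) in
/-- `C` is PF if `a⊥` is pure for every compact `a`. -/
def PF : Prop := ∀ a : C, IsCompactElement a → IsPure (ann a)

variable (C) in
/-- `C` is PP if `a⊥` is complemented for every compact `a`. -/
def PP : Prop := ∀ a : C, IsCompactElement a → IsComplEl (ann a)

/-- `O(p) := ⨆ {a compact | a⊥ ≰ p}`. -/
def O (p : C) : C := sSup {a : C | IsCompactElement a ∧ ¬ ann a ≤ p}

variable (C) in
/-- `C` is normal. -/
def Normal : Prop := ∀ t u : C, t ⊔ u = ⊤ →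
  ∃ a b : C, t ⊔ a = ⊤ ∧ u ⊔ b = ⊤ ∧ comm a b = ⊥

variable (C) in
/-- `C` is B-normal. -/
def BNormal : Prop := ∀ t u : C, t ⊔ u = ⊤ →
  ∃ a b : C, IsComplEl a ∧ IsComplEl b ∧ t ⊔ a = ⊤ ∧ u ⊔ b = ⊤ ∧ comm a b = ⊥

variable (C) in
/-- `C` is purified. -/
def Purified : Prop := ∀ p q : C, IsMinPrime p → IsMinPrime q → p ≠ q →
  ∃ a : C, IsComplEl a ∧ a ≤ p ∧ ann a ≤ q

variable (C) in
/-- The prime spectrum of `C`. -/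
abbrev Spec := {p : C // IsPrime p}

variable (C) in
/-- The Zariski topology on `Spec C`: the closed sets are the `V(t) = {p | t ≤ p}`,
equivalently the topology generated by the sets `D(t) = {p | t ≰ p}`. -/
def zariskiTop : TopologicalSpace (Spec C) :=
  TopologicalSpace.generateFrom {U : Set (Spec C) | ∃ t : C, U = {p : Spec C | ¬ t ≤ p.1}}

variable (C) in
/-- The flat topology on `Spec C`: generated by the open basis `V(a)`, `a` compact. -/
def flatTop : TopologicalSpace (Spec C) :=
  TopologicalSpace.generateFrom
    {U : Set (Spec C) | ∃ a : C, IsCompactElement a ∧ U = {p : Spec C | a ≤ p.1}}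

/-!
In a semiprime `C` we have `[u,v] = ⊥` iff `u ⊓ v = ⊥`, so annihilators behave as in a reduced
ring. The key fact: if `q` is prime, `a` is compact and `a⊥ ≤ q`, then some prime below `q`
misses `a`. Indeed the compact `w` with `w⊥ ≤ (a ⊓ e)⊥` for some `e ≰ q` form an m-system that
contains `a` and every compact outside `q`, and none of them is `⊥`; a prime maximal among the
elements avoiding it lies below `q` and misses `a`. Hence `a⊥ ≰ q` whenever `a ≤ q` for a
minimal prime `q`.

PF gives mp: minimal primes `q ≠ q'` below a prime `p` yield compacts `a ≤ q'`, `a ≰ q` and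
`b ≤ a⊥`, `b ≰ q'`, and then `⊤ = a⊥ ⊔ b⊥ ≤ q ⊔ q' ≤ p`. PF gives semiprimeness because
`[a,a] = ⊥` forces `a⊥ = a⊥ ⊔ a⊥ = ⊤`, while a compact below `ρ(⊥)` has some `[a,a]^n = ⊥`.
Conversely, if `a⊥ ⊔ b⊥` with `b ≤ a⊥` lay below a prime `m`, the key fact would give minimal
primes below `m` missing `a` and missing `b`; by mp they coincide, contradicting `[a,b] = ⊥`.
-/

instance : IsCompactlyGenerated C := ⟨compactlyGenerated⟩

lemma exists_isCompactElement_le_not_le {α : Type*} [CompleteLattice α] [IsCompactlyGenerated α]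
    {x y : α} (h : ¬ x ≤ y) :
    ∃ c, IsCompactElement c ∧ c ≤ x ∧ ¬ c ≤ y := by
  simpa only [le_iff_compact_le_imp (a := x), not_forall, exists_prop] using h

lemma comm_sup_left (a b c : C) : comm (a ⊔ b) c = comm a c ⊔ comm b c := by
  rw [← sSup_pair, comm_sSup, iSup_pair]

lemma comm_mono_left {a b : C} (h : a ≤ b) (c : C) : comm a c ≤ comm b c := by
  rw [← sup_eq_right.mpr h, comm_sup_left]
  exact le_sup_left

lemma comm_mono_right (a : C) {b c : C} (h : b ≤ c) : comm a b ≤ comm a c := by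
  simpa only [comm_comm a] using comm_mono_left h a

lemma comm_mono {a b c d : C} (h₁ : a ≤ b) (h₂ : c ≤ d) : comm a c ≤ comm b d :=
  (comm_mono_left h₁ c).trans (comm_mono_right b h₂)

lemma comm_bot_left (b : C) : comm ⊥ b = ⊥ := by
  simpa using comm_sSup ∅ b

lemma comm_sup_sup_le (a b c : C) : comm (a ⊔ b) (a ⊔ c) ≤ a ⊔ comm b c := by
  rw [comm_sup_left, comm_comm b, comm_sup_left, comm_comm c]
  exact sup_le ((comm_le_inf _ _).trans (inf_le_left.trans le_sup_left))
    (sup_le_sup_right ((comm_le_inf _ _).trans inf_le_left) _)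

lemma comm_resid_le (a b : C) : comm a (resid a b) ≤ b := by
  rw [comm_comm, resid, comm_sSup]
  exact iSup₂_le fun c hc => (comm_comm c a).trans_le hc

lemma le_resid_iff {a b c : C} : c ≤ resid a b ↔ comm a c ≤ b :=
  ⟨fun h => (comm_mono_right a h).trans (comm_resid_le a b), fun h => le_sSup h⟩

lemma le_ann_iff {a b : C} : b ≤ ann a ↔ comm a b = ⊥ := by
  rw [ann, le_resid_iff, le_bot_iff]

lemma comm_ann (a : C) : comm a (ann a) = ⊥ :=
  le_ann_iff.mp le_rfl

lemma ann_antitone : Antitone (ann : C → C) := fun _ b h =>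
  le_ann_iff.mpr (le_bot_iff.mp ((comm_mono_left h _).trans_eq (comm_ann b)))

lemma ann_bot : ann (⊥ : C) = ⊤ :=
  top_le_iff.mp (le_ann_iff.mpr (comm_bot_left ⊤))

lemma isCompactElement_cpow {a : C} (ha : IsCompactElement a) (n : ℕ) :
    IsCompactElement (cpow a n) := by
  induction n with
  | zero => exact ha
  | succ n ih => exact comm_isCompact _ _ ih ih

lemma cpow_antitone (a : C) : Antitone (cpow a) :=
  antitone_nat_of_succ_le fun _ => (comm_le_inf _ _).trans inf_le_left

lemma IsPrime.le_or_le_of_inf_le {p a b : C} (hp : IsPrime p) (h : a ⊓ b ≤ p) :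
    a ≤ p ∨ b ≤ p :=
  hp.2 a b ((comm_le_inf a b).trans h)

lemma IsPrime.ann_le {p a : C} (hp : IsPrime p) (h : ¬ a ≤ p) : ann a ≤ p :=
  (hp.2 a (ann a) ((comm_ann a).trans_le bot_le)).resolve_left h

lemma exists_maximal_avoiding {α : Type*} [CompleteLattice α] {S : Set α}
    (hS : ∀ s ∈ S, IsCompactElement s) {z : α}
    (hz : ∀ s ∈ S, ¬ s ≤ z) : ∃ m, z ≤ m ∧ Maximal (fun x => ∀ s ∈ S, ¬ s ≤ x) m := by
  refine zorn_le_nonempty₀ {x | ∀ s ∈ S, ¬ s ≤ x}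
    (fun c hc hchain y hy => ⟨sSup c, fun s hs hle => ?_, fun _ => le_sSup⟩) z hz
  obtain ⟨x, hx, hsx⟩ := (isCompactElement_iff_le_of_directed_sSup_le α s).mp (hS s hs) c
    ⟨y, hy⟩ hchain.directedOn hle
  exact hc hx s hs hsx

lemma isPrime_of_maximal_avoiding {S : Set C} (hne : S.Nonempty)
    (hmul : ∀ u ∈ S, ∀ v ∈ S, ∃ w ∈ S, w ≤ comm u v) {m : C}
    (hm : Maximal (fun x => ∀ s ∈ S, ¬ s ≤ x) m) : IsPrime m := by
  refine ⟨fun htop => ?_, fun x y hxy => ?_⟩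
  · obtain ⟨s, hs⟩ := hne
    exact hm.1 s hs (htop ▸ le_top)
  by_contra! hxy_m
  have meets : ∀ {x}, ¬ x ≤ m → ∃ s ∈ S, s ≤ m ⊔ x := fun hx => by
    by_contra! h
    exact hx (le_sup_right.trans (hm.2 h le_sup_left))
  obtain ⟨s, hs, hsx⟩ := meets hxy_m.1
  obtain ⟨t, ht, hty⟩ := meets hxy_m.2
  obtain ⟨w, hw, hwst⟩ := hmul s hs t ht
  exact hm.1 w hw <| calc
    w ≤ comm (m ⊔ x) (m ⊔ y) := hwst.trans (comm_mono hsx hty)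
    _ ≤ m ⊔ comm x y := comm_sup_sup_le m x y
    _ ≤ m := sup_le le_rfl hxy

lemma exists_isPrime_avoiding {S : Set C} (hne : S.Nonempty) (hS : ∀ s ∈ S, IsCompactElement s)
    (hmul : ∀ u ∈ S, ∀ v ∈ S, ∃ w ∈ S, w ≤ comm u v) {z : C} (hz : ∀ s ∈ S, ¬ s ≤ z) :
    ∃ m, IsPrime m ∧ z ≤ m ∧ ∀ s ∈ S, ¬ s ≤ m := by
  obtain ⟨m, hzm, hm⟩ := exists_maximal_avoiding hS hz
  exact ⟨m, isPrime_of_maximal_avoiding hne hmul hm, hzm, hm.1⟩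

lemma exists_isPrime_ge {z : C} (hz : z ≠ ⊤) : ∃ m, IsPrime m ∧ z ≤ m := by
  obtain ⟨m, hm, hzm, -⟩ := exists_isPrime_avoiding (S := ({⊤} : Set C)) (Set.singleton_nonempty _)
    (by simpa using top_isCompact) (by simp [comm_top]) (by simpa using hz)
  exact ⟨m, hm, hzm⟩

lemma isPrime_sInf_of_isChain {c : Set C} (hc : ∀ q ∈ c, IsPrime q) (hne : c.Nonempty)
    (hchain : IsChain (· ≤ ·) c) : IsPrime (sInf c) := by
  obtain ⟨r, hr⟩ := hne
  refine ⟨fun h => (hc r hr).1 (top_le_iff.mp (h ▸ sInf_le hr)), fun x y hxy => ?_⟩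
  by_contra! hcon
  obtain ⟨⟨r, hr, hxr⟩, ⟨r', hr', hyr'⟩⟩ : (∃ r ∈ c, ¬ x ≤ r) ∧ ∃ r ∈ c, ¬ y ≤ r := by
    simpa only [le_sInf_iff, not_forall, exists_prop] using hcon
  rcases hchain.total hr hr' with h | h
  · exact ((hc r hr).2 x y (hxy.trans (sInf_le hr))).elim hxr fun hy => hyr' (hy.trans h)
  · exact ((hc r' hr').2 x y (hxy.trans (sInf_le hr'))).elim (fun hx => hxr (hx.trans h)) hyr'

open OrderDual in
lemma exists_isMinPrime_le {p : C} (hp : IsPrime p) : ∃ q, IsMinPrime q ∧ q ≤ p := by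
  have chains_bounded : ∀ c ⊆ {x : Cᵒᵈ | IsPrime (ofDual x) ∧ ofDual x ≤ p}, IsChain (· ≤ ·) c →
      ∀ y ∈ c, ∃ ub ∈ {x : Cᵒᵈ | IsPrime (ofDual x) ∧ ofDual x ≤ p}, ∀ x ∈ c, x ≤ ub := by
    intro c hc hchain y hy
    refine ⟨toDual (sInf (ofDual '' c)), ⟨?_, (sInf_le (Set.mem_image_of_mem ofDual hy)).trans
      (hc hy).2⟩, fun x hx => le_toDual.mpr (sInf_le (Set.mem_image_of_mem ofDual hx))⟩
    refine isPrime_sInf_of_isChain ?_ ⟨_, Set.mem_image_of_mem ofDual hy⟩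
      (hchain.image_of_map_rel _ (· ≥ ·) ofDual fun _ _ h => h).symm
    rintro _ ⟨x, hx, rfl⟩
    exact (hc hx).1
  obtain ⟨q, -, hq⟩ := zorn_le_nonempty₀ _ chains_bounded (toDual p) ⟨hp, le_rfl⟩
  exact ⟨ofDual q, ⟨hq.1.1, fun r hr hrq =>
    le_antisymm hrq (hq.2 (y := toDual r) ⟨hr, hrq.trans hq.1.2⟩ hrq)⟩, hq.1.2⟩

lemma Semiprime.eq_bot_of_comm_self_eq_bot (hC : Semiprime C) {a : C} (h : comm a a = ⊥) :
    a = ⊥ := by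
  rw [← le_bot_iff, ← hC]
  exact le_sInf fun p hp => (hp.1.2 a a (h.trans_le bot_le)).elim id id

lemma Semiprime.comm_eq_bot_iff (hC : Semiprime C) {a b : C} : comm a b = ⊥ ↔ a ⊓ b = ⊥ :=
  ⟨fun h => hC.eq_bot_of_comm_self_eq_bot
      (le_bot_iff.mp ((comm_mono inf_le_left inf_le_right).trans h.le)),
    fun h => le_bot_iff.mp ((comm_le_inf a b).trans h.le)⟩

lemma Semiprime.le_ann_iff_inf_eq_bot (hC : Semiprime C) {a b : C} : b ≤ ann a ↔ a ⊓ b = ⊥ := by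
  rw [le_ann_iff, hC.comm_eq_bot_iff]

lemma Semiprime.le_ann_inf_iff (hC : Semiprime C) {a b x : C} :
    x ≤ ann (a ⊓ b) ↔ b ⊓ x ≤ ann a := by
  rw [hC.le_ann_iff_inf_eq_bot, hC.le_ann_iff_inf_eq_bot, inf_assoc]

lemma Semiprime.ann_comm (hC : Semiprime C) (a b : C) : ann (comm a b) = ann (a ⊓ b) := by
  refine le_antisymm ?_ (ann_antitone (comm_le_inf a b))
  rw [hC.le_ann_iff_inf_eq_bot, inf_inf_distrib_right, ← hC.comm_eq_bot_iff, ← le_bot_iff]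
  calc comm (a ⊓ ann (comm a b)) (b ⊓ ann (comm a b))
      ≤ comm a b ⊓ ann (comm a b) :=
        le_inf (comm_mono inf_le_left inf_le_left)
          ((comm_le_inf _ _).trans (inf_le_left.trans inf_le_right))
    _ = ⊥ := hC.le_ann_iff_inf_eq_bot.mp le_rfl

lemma Semiprime.ann_inf_le_ann_inf (hC : Semiprime C) {a a' b b' : C} (ha : ann a ≤ ann a')
    (hb : ann b ≤ ann b') : ann (a ⊓ b) ≤ ann (a' ⊓ b') := by
  have left : ∀ {a a' b : C}, ann a ≤ ann a' → ann (a ⊓ b) ≤ ann (a' ⊓ b) := fun h =>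
    hC.le_ann_inf_iff.mpr ((hC.le_ann_inf_iff.mp le_rfl).trans h)
  calc ann (a ⊓ b) ≤ ann (a' ⊓ b) := left ha
    _ = ann (b ⊓ a') := by rw [inf_comm]
    _ ≤ ann (b' ⊓ a') := left hb
    _ = ann (a' ⊓ b') := by rw [inf_comm]

lemma IsPrime.ann_inf_le (hC : Semiprime C) {q a e : C} (hq : IsPrime q) (ha : ann a ≤ q)
    (he : ¬ e ≤ q) : ann (a ⊓ e) ≤ q :=
  (hq.le_or_le_of_inf_le ((hC.le_ann_inf_iff.mp le_rfl).trans ha)).resolve_left he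

lemma exists_isPrime_le_not_le (hC : Semiprime C) {q a : C} (hq : IsPrime q)
    (ha : IsCompactElement a) (haq : ann a ≤ q) : ∃ m, IsPrime m ∧ m ≤ q ∧ ¬ a ≤ m := by
  set S := {w : C | IsCompactElement w ∧ ∃ e, ¬ e ≤ q ∧ ann w ≤ ann (a ⊓ e)}
  have haS : a ∈ S := ⟨ha, ⊤, fun h => hq.1 (top_le_iff.mp h), by rw [inf_top_eq]⟩
  have hcS : ∀ c, IsCompactElement c → ¬ c ≤ q → c ∈ S := fun c hc hcq =>
    ⟨hc, c, hcq, ann_antitone inf_le_right⟩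
  have hmul : ∀ u ∈ S, ∀ v ∈ S, ∃ w ∈ S, w ≤ comm u v := by
    rintro u ⟨hu, e₁, he₁, hue⟩ v ⟨hv, e₂, he₂, hve⟩
    refine ⟨comm u v, ⟨comm_isCompact u v hu hv, e₁ ⊓ e₂, fun h => ?_, ?_⟩, le_rfl⟩
    · exact (hq.le_or_le_of_inf_le h).elim he₁ he₂
    · rw [hC.ann_comm, inf_inf_distrib_left]
      exact hC.ann_inf_le_ann_inf hue hve
  have hS_not_bot : ∀ s ∈ S, ¬ s ≤ ⊥ := by
    rintro s ⟨-, e, he, hse⟩ hs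
    rw [le_bot_iff.mp hs, ann_bot] at hse
    exact hq.1 (top_le_iff.mp (hse.trans (hq.ann_inf_le hC haq he)))
  obtain ⟨m, hm, -, hmS⟩ := exists_isPrime_avoiding ⟨a, haS⟩ (fun s hs => hs.1) hmul hS_not_bot
  refine ⟨m, hm, le_iff_compact_le_imp.mpr fun c hc hcm => ?_, hmS a haS⟩
  by_contra hcq
  exact hmS c (hcS c hc hcq) hcm

lemma exists_isMinPrime_le_not_le (hC : Semiprime C) {q a : C} (hq : IsPrime q)
    (ha : IsCompactElement a) (haq : ann a ≤ q) : ∃ r, IsMinPrime r ∧ r ≤ q ∧ ¬ a ≤ r := by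
  obtain ⟨m, hm, hmq, ham⟩ := exists_isPrime_le_not_le hC hq ha haq
  obtain ⟨r, hr, hrm⟩ := exists_isMinPrime_le hm
  exact ⟨r, hr, hrm.trans hmq, fun har => ham (har.trans hrm)⟩

lemma IsMinPrime.ann_not_le (hC : Semiprime C) {q a : C} (hq : IsMinPrime q)
    (ha : IsCompactElement a) (haq : a ≤ q) : ¬ ann a ≤ q := fun h => by
  obtain ⟨m, hm, hmq, ham⟩ := exists_isPrime_le_not_le hC hq.1 ha h
  exact ham (hq.2 m hm hmq ▸ haq)

lemma exists_cpow_eq_bot_of_le_radical_bot {c : C} (hc : IsCompactElement c)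
    (h : c ≤ radical ⊥) : ∃ n, cpow c n = ⊥ := by
  by_contra! hn
  obtain ⟨p, hp, -, hpc⟩ := exists_isPrime_avoiding (S := Set.range (cpow c)) ⟨c, 0, rfl⟩
    (by rintro _ ⟨n, rfl⟩; exact isCompactElement_cpow hc n)
    (by
      rintro _ ⟨i, rfl⟩ _ ⟨j, rfl⟩
      exact ⟨cpow c (max i j + 1), ⟨_, rfl⟩,
        comm_mono (cpow_antitone c (le_max_left i j)) (cpow_antitone c (le_max_right i j))⟩)
    (z := ⊥) (by rintro _ ⟨n, rfl⟩ h; exact hn n (le_bot_iff.mp h))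
  exact hpc c ⟨0, rfl⟩ (h.trans (sInf_le ⟨hp, bot_le⟩))

lemma semiprime_of_forall_comm_self_eq_bot
    (h : ∀ a : C, IsCompactElement a → comm a a = ⊥ → a = ⊥) : Semiprime C := by
  refine le_bot_iff.mp (le_iff_compact_le_imp.mpr fun c hc hcr => ?_)
  obtain ⟨n, hn⟩ := exists_cpow_eq_bot_of_le_radical_bot hc hcr
  suffices ∀ n, cpow c n = ⊥ → c = ⊥ from (this n hn).le
  intro n
  induction n with
  | zero => exact id
  | succ k ih => exact fun hk => ih (h _ (isCompactElement_cpow hc k) hk)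

lemma PF.semiprime (hC : PF C) : Semiprime C :=
  semiprime_of_forall_comm_self_eq_bot fun a ha h => by
    have : ann a = ⊤ := by simpa using hC a ha a ha (le_ann_iff.mpr h)
    simpa [this, comm_top] using comm_ann a

lemma PF.eq_of_isMinPrime_le (hC : PF C) {p q q' : C} (hp : IsPrime p) (hq : IsMinPrime q)
    (hq' : IsMinPrime q') (hqp : q ≤ p) (hq'p : q' ≤ p) : q' = q := by
  by_contra hne
  obtain ⟨a, ha, haq', haq⟩ := exists_isCompactElement_le_not_le fun h => hne (hq.2 q' hq'.1 h)
  obtain ⟨b, hb, hba, hbq'⟩ :=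
    exists_isCompactElement_le_not_le (hq'.ann_not_le hC.semiprime ha haq')
  have : ann a ⊔ ann b ≤ p :=
    sup_le ((hq.1.ann_le haq).trans hqp) ((hq'.1.ann_le hbq').trans hq'p)
  exact hp.1 (top_le_iff.mp (hC a ha b hb hba ▸ this))

lemma pf_of_semiprime_of_mp (hC : Semiprime C) (hmp : MP C) : PF C := by
  intro a ha b hb hba
  by_contra hne
  obtain ⟨m, hm, hm_ge⟩ := exists_isPrime_ge hne
  obtain ⟨r₁, hr₁, hr₁m, har₁⟩ := exists_isMinPrime_le_not_le hC hm ha (le_sup_left.trans hm_ge)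
  obtain ⟨r₂, hr₂, hr₂m, hbr₂⟩ := exists_isMinPrime_le_not_le hC hm hb (le_sup_right.trans hm_ge)
  obtain rfl : r₁ = r₂ := (hmp m hm).unique ⟨hr₁, hr₁m⟩ ⟨hr₂, hr₂m⟩
  exact (hr₁.1.2 a b ((le_ann_iff.mp hba).trans_le bot_le)).elim har₁ hbr₂

theorem statement15 : PF C ↔ Semiprime C ∧ MP C := by
  refine ⟨fun hC => ⟨hC.semiprime, fun p hp => ?_⟩, fun h => pf_of_semiprime_of_mp h.1 h.2⟩
  obtain ⟨q, hq, hqp⟩ := exists_isMinPrime_le hp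
  exact ⟨q, ⟨hq, hqp⟩, fun q' hq' => hC.eq_of_isMinPrime_le hp hq hq'.1 hqp hq'.2⟩

end CommutatorLattice
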